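/- arXiv:2006.07750 — 4 statements merged into one kernel-verified Lean document; each statement's English description precedes it below -/
import Mathlib

section
/- The joint interference function satisfies joint scalability: for all scalars α > 1 and α' > 1 and all nonnegative vectors p̂, p, one has α·α'·I(p̂, p) > I(α·p̂, α'·p). In particular, α·α'·I(p̂,p) − I(α p̂, α' p) = (α(α'−1)·σ²·A·Σᵢ βᵢ p̂ᵢ + α'(α−1)·σ²·Σⱼ cⱼ pⱼ + (αα'−1)·σ⁴)/D. -/
/-- Joint scalability of the joint interference function (Eq. (14)):
for α, α' > 1, `α·α'·I(phat,p) > I(α phat, α' p)`, with the explicit difference identity. -/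
theorem stmt_2 (n m : ℕ) (hnm : n ≤ m)
    (A σ2 D E : ℝ) (hA : 0 < A) (hσ2 : 0 < σ2) (hD : 0 < D) (hE : 0 < E)
    (β d : Fin n → ℝ) (c : Fin m → ℝ)
    (hβ : ∀ i, 0 ≤ β i) (hc : ∀ j, 0 ≤ c j) (hd : ∀ i, 0 ≤ d i)
    (I : (Fin n → ℝ) → (Fin m → ℝ) → ℝ)
    (hI : ∀ phat p, I phat p =
      ((A * ∑ i, β i * phat i + σ2) * (∑ j, c j * p j + σ2)
        + E * ∑ i, d i * p (Fin.castLE hnm i) * phat i) / D)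
    (α α' : ℝ) (hα : 1 < α) (hα' : 1 < α')
    (phat : Fin n → ℝ) (p : Fin m → ℝ)
    (hphat : ∀ i, 0 ≤ phat i) (hp : ∀ j, 0 ≤ p j) :
    α * α' * I phat p > I (fun i => α * phat i) (fun j => α' * p j) ∧
    α * α' * I phat p - I (fun i => α * phat i) (fun j => α' * p j) =
      (α * (α' - 1) * σ2 * (A * ∑ i, β i * phat i)
        + α' * (α - 1) * σ2 * (∑ j, c j * p j)
        + (α * α' - 1) * σ2 ^ 2) / D := by
  have h1 : (∑ i, β i * (α * phat i)) = α * ∑ i, β i * phat i := by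
    rw [Finset.mul_sum]; exact Finset.sum_congr rfl fun i _ => by ring
  have h2 : (∑ j, c j * (α' * p j)) = α' * ∑ j, c j * p j := by
    rw [Finset.mul_sum]; exact Finset.sum_congr rfl fun j _ => by ring
  have h3 : (∑ i, d i * (α' * p (Fin.castLE hnm i)) * (α * phat i))
      = α * α' * ∑ i, d i * p (Fin.castLE hnm i) * phat i := by
    rw [Finset.mul_sum]; exact Finset.sum_congr rfl fun i _ => by ring
  have key : α * α' * I phat p - I (fun i => α * phat i) (fun j => α' * p j) =
      (α * (α' - 1) * σ2 * (A * ∑ i, β i * phat i)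
        + α' * (α - 1) * σ2 * (∑ j, c j * p j)
        + (α * α' - 1) * σ2 ^ 2) / D := by
    rw [hI, hI]
    simp only [h1, h2, h3]
    field_simp
    ring
  refine ⟨?_, key⟩
  have hnum : 0 < α * (α' - 1) * σ2 * (A * ∑ i, β i * phat i)
        + α' * (α - 1) * σ2 * (∑ j, c j * p j)
        + (α * α' - 1) * σ2 ^ 2 := by
    have hs1 : 0 ≤ ∑ i, β i * phat i :=
      Finset.sum_nonneg fun i _ => mul_nonneg (hβ i) (hphat i)
    have hs2 : 0 ≤ ∑ j, c j * p j :=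
      Finset.sum_nonneg fun j _ => mul_nonneg (hc j) (hp j)
    have t1 : 0 ≤ α * (α' - 1) * σ2 * (A * ∑ i, β i * phat i) := by
      apply mul_nonneg (mul_nonneg (mul_nonneg (by linarith) (by linarith)) hσ2.le)
      exact mul_nonneg hA.le hs1
    have t2 : 0 ≤ α' * (α - 1) * σ2 * (∑ j, c j * p j) :=
      mul_nonneg (mul_nonneg (mul_nonneg (by linarith) (by linarith)) hσ2.le) hs2
    have t3 : 0 < (α * α' - 1) * σ2 ^ 2 := by
      apply mul_pos _ (pow_pos hσ2 2)
      nlinarith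
    linarith
  have : 0 < α * α' * I phat p - I (fun i => α * phat i) (fun j => α' * p j) := by
    rw [key]; positivity
  linarith
end

section
/- If I : ℝ₊ᴺ → ℝ₊ᴺ is a standard interference function (componentwise positive, monotone, scalable) and P_max ∈ ℝ₊ᴺ is a positive vector, then the constrained map Î(p) defined componentwise by Î_k(p) = min(I_k(p), P_max,k) is also a standard interference function. -/
/-- The constrained interference function (Eq. (18)):
`Î_k(p) = min (I_k p) (Pmax k)` is again a standard interference function. -/
theorem stmt_8 (N : ℕ) (I : (Fin N → ℝ) → (Fin N → ℝ)) (Pmax : Fin N → ℝ)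
    (hPmax : ∀ k, 0 < Pmax k)
    (hpos : ∀ p : Fin N → ℝ, (∀ i, 0 ≤ p i) → ∀ k, 0 < I p k)
    (hmono : ∀ p q : Fin N → ℝ, (∀ i, 0 ≤ p i) → (∀ i, p i ≤ q i) →
      ∀ k, I p k ≤ I q k)
    (hscale : ∀ (α : ℝ), 1 < α → ∀ p : Fin N → ℝ, (∀ i, 0 ≤ p i) →
      ∀ k, I (fun i => α * p i) k < α * I p k) :
    (∀ p : Fin N → ℝ, (∀ i, 0 ≤ p i) → ∀ k, 0 < min (I p k) (Pmax k)) ∧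
    (∀ p q : Fin N → ℝ, (∀ i, 0 ≤ p i) → (∀ i, p i ≤ q i) →
      ∀ k, min (I p k) (Pmax k) ≤ min (I q k) (Pmax k)) ∧
    (∀ (α : ℝ), 1 < α → ∀ p : Fin N → ℝ, (∀ i, 0 ≤ p i) →
      ∀ k, min (I (fun i => α * p i) k) (Pmax k) < α * min (I p k) (Pmax k)) := by
  refine ⟨fun p hp k => lt_min (hpos p hp k) (hPmax k),
    fun p q hp hpq k => min_le_min (hmono p q hp hpq k) le_rfl,
    fun α hα p hp k => ?_⟩
  have h1 : I (fun i => α * p i) k < α * I p k := hscale α hα p hp k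
  have h2 : Pmax k < α * Pmax k := by
    nlinarith [hPmax k]
  rcases le_total (I p k) (Pmax k) with h | h
  · calc min (I (fun i => α * p i) k) (Pmax k) ≤ I (fun i => α * p i) k := min_le_left _ _
      _ < α * I p k := h1
      _ = α * min (I p k) (Pmax k) := by rw [min_eq_left h]
  · calc min (I (fun i => α * p i) k) (Pmax k) ≤ Pmax k := min_le_right _ _
      _ < α * Pmax k := h2
      _ = α * min (I p k) (Pmax k) := by rw [min_eq_right h]
end

section
/- Let I : ℝ₊ᴺ → ℝ₊ᴺ be a standard interference function and suppose the iteration p(n) = min(I(p(n−1)), P_max) (componentwise) is started at p(0) = P_max. Then the sequence p(n) is componentwise non-increasing and converges to a fixed point p* satisfying p* = min(I(p*), P_max). -/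
/-- Convergence of Algorithm 2: the constrained iteration
`p (n+1) k = min (I (p n) k) (Pmax k)` started at `p 0 = Pmax` is componentwise
non-increasing and converges to a fixed point `p*` with `p* = min(I(p*), Pmax)`. -/
theorem stmt_9 (N : ℕ) (I : (Fin N → ℝ) → (Fin N → ℝ)) (Pmax : Fin N → ℝ)
    (hPmax : ∀ k, 0 < Pmax k)
    (hpos : ∀ p : Fin N → ℝ, (∀ i, 0 ≤ p i) → ∀ k, 0 < I p k)
    (hmono : ∀ p q : Fin N → ℝ, (∀ i, 0 ≤ p i) → (∀ i, p i ≤ q i) →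
      ∀ k, I p k ≤ I q k)
    (hscale : ∀ (α : ℝ), 1 < α → ∀ p : Fin N → ℝ, (∀ i, 0 ≤ p i) →
      ∀ k, I (fun i => α * p i) k < α * I p k)
    (p : ℕ → Fin N → ℝ)
    (hp0 : p 0 = Pmax)
    (hiter : ∀ n, p (n + 1) = fun k => min (I (p n) k) (Pmax k)) :
    (∀ n k, p (n + 1) k ≤ p n k) ∧
    ∃ pstar : Fin N → ℝ, Filter.Tendsto p Filter.atTop (nhds pstar) ∧
      ∀ k, pstar k = min (I pstar k) (Pmax k) := by
  -- positivity of all iterates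
  have hposn : ∀ n k, 0 < p n k := by
    intro n
    induction n with
    | zero => intro k; rw [hp0]; exact hPmax k
    | succ n ih =>
      intro k
      rw [hiter n]
      exact lt_min (hpos _ (fun i => (ih i).le) k) (hPmax k)
  have hnn : ∀ n k, 0 ≤ p n k := fun n k => (hposn n k).le
  -- monotone decreasing
  have hdec : ∀ n k, p (n + 1) k ≤ p n k := by
    intro n
    induction n with
    | zero =>
      intro k
      rw [hiter 0, hp0]
      exact min_le_right _ _
    | succ n ih =>
      intro k
      rw [hiter (n + 1)]
      conv_rhs => rw [hiter n]
      exact min_le_min (hmono _ _ (hnn (n + 1)) ih k) le_rfl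
  have hanti : ∀ k, Antitone fun n => p n k := fun k =>
    antitone_nat_of_succ_le (fun n => hdec n k)
  have hbdd : ∀ k, BddBelow (Set.range fun n => p n k) :=
    fun k => ⟨0, by rintro x ⟨n, rfl⟩; exact hnn n k⟩
  set q : Fin N → ℝ := fun k => ⨅ n, p n k with hq
  have htendk : ∀ k, Filter.Tendsto (fun n => p n k) Filter.atTop (nhds (q k)) :=
    fun k => tendsto_atTop_ciInf (hanti k) (hbdd k)
  have hqle : ∀ n k, q k ≤ p n k := fun n k => ciInf_le (hbdd k) n
  have hqnn : ∀ k, 0 ≤ q k := fun k => le_ciInf (fun n => hnn n k)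
  -- q ≥ min (I q) Pmax
  have hge : ∀ k, min (I q k) (Pmax k) ≤ q k := by
    intro k
    refine le_ciInf ?_
    intro n
    cases n with
    | zero => rw [hp0]; exact min_le_right _ _
    | succ n =>
      rw [hiter n]
      exact min_le_min (hmono _ _ hqnn (fun i => hqle n i) k) le_rfl
  have hqpos : ∀ k, 0 < q k := fun k =>
    lt_of_lt_of_le (lt_min (hpos _ hqnn k) (hPmax k)) (hge k)
  -- q ≤ Pmax
  have hqPmax : ∀ k, q k ≤ Pmax k := by
    intro k
    have := hqle 0 k
    rwa [hp0] at this
  -- q ≤ I q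
  have hqI : ∀ k, q k ≤ I q k := by
    intro k
    by_contra hlt
    push_neg at hlt
    have hIpos : 0 < I q k := hpos _ hqnn k
    set α : ℝ := q k / I q k with hα
    have hα1 : 1 < α := (one_lt_div hIpos).2 hlt
    -- eventually p n ≤ α * q componentwise
    have hev : ∀ᶠ n in Filter.atTop, ∀ i, p n i ≤ α * q i := by
      rw [Filter.eventually_all]
      intro i
      have : q i < α * q i := by
        nlinarith [hqpos i]
      filter_upwards [(htendk i).eventually_lt_const this] with n hn using hn.le
    obtain ⟨n, hn⟩ := hev.exists
    have h1 : q k ≤ p (n + 1) k := hqle (n + 1) k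
    have h2 : p (n + 1) k ≤ I (p n) k := by
      rw [hiter n]; exact min_le_left _ _
    have h3 : I (p n) k ≤ I (fun i => α * q i) k :=
      hmono _ _ (hnn n) hn k
    have h4 : I (fun i => α * q i) k < α * I q k := hscale α hα1 q hqnn k
    have h5 : α * I q k = q k := div_mul_cancel₀ _ hIpos.ne'
    linarith
  refine ⟨hdec, q, ?_, ?_⟩
  · rw [tendsto_pi_nhds]; exact htendk
  · intro k
    exact le_antisymm (le_min (hqI k) (hqPmax k)) (hge k)
end

section
/- For a standard interference function I : ℝ₊ᴺ → ℝ₊ᴺ (positive, monotone, scalable), any two fixed points p and q of p = I(p) must coincide: the fixed point, if it exists, is unique. -/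
lemma stmt_18_aux (N : ℕ) (I : (Fin N → ℝ) → (Fin N → ℝ))
    (hmono : ∀ p q : Fin N → ℝ, (∀ i, 0 ≤ p i) → (∀ i, p i ≤ q i) →
      ∀ k, I p k ≤ I q k)
    (hscale : ∀ (α : ℝ), 1 < α → ∀ p : Fin N → ℝ, (∀ i, 0 ≤ p i) →
      ∀ k, I (fun i => α * p i) k < α * I p k)
    (p q : Fin N → ℝ)
    (hp : ∀ k, 0 ≤ p k) (hq : ∀ k, 0 < q k)
    (hfp : I p = p) (hfq : I q = q) :
    ∀ k, p k ≤ q k := by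
  by_contra h
  push_neg at h
  obtain ⟨k0, hk0⟩ := h
  have hne : (Finset.univ : Finset (Fin N)).Nonempty := ⟨k0, Finset.mem_univ _⟩
  obtain ⟨i0, -, hi0⟩ := Finset.exists_max_image Finset.univ (fun i => p i / q i) hne
  set α := p i0 / q i0 with hα
  have hα1 : 1 < α := by
    have := hi0 k0 (Finset.mem_univ _)
    have h1 : 1 < p k0 / q k0 := (one_lt_div (hq k0)).mpr hk0
    exact lt_of_lt_of_le h1 this
  have hle : ∀ i, p i ≤ α * q i := by
    intro i
    have := hi0 i (Finset.mem_univ _)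
    calc p i = (p i / q i) * q i := (div_mul_cancel₀ _ (hq i).ne').symm
      _ ≤ α * q i := by
        exact mul_le_mul_of_nonneg_right this (hq i).le
  have heq : p i0 = α * q i0 := (div_mul_cancel₀ _ (hq i0).ne').symm
  have : p i0 < p i0 := by
    calc p i0 = I p i0 := (congrFun hfp i0).symm
      _ ≤ I (fun i => α * q i) i0 := hmono p _ hp hle i0
      _ < α * I q i0 := hscale α hα1 q (fun i => (hq i).le) i0
      _ = α * q i0 := by rw [hfq]
      _ = p i0 := heq.symm
  exact absurd this (lt_irrefl _)


/-- Yates' uniqueness theorem: a standard interference function (componentwise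
positive, monotone, scalable) has at most one nonnegative fixed point. -/
theorem stmt_18 (N : ℕ) (I : (Fin N → ℝ) → (Fin N → ℝ))
    (hpos : ∀ p : Fin N → ℝ, (∀ i, 0 ≤ p i) → ∀ k, 0 < I p k)
    (hmono : ∀ p q : Fin N → ℝ, (∀ i, 0 ≤ p i) → (∀ i, p i ≤ q i) →
      ∀ k, I p k ≤ I q k)
    (hscale : ∀ (α : ℝ), 1 < α → ∀ p : Fin N → ℝ, (∀ i, 0 ≤ p i) →
      ∀ k, I (fun i => α * p i) k < α * I p k)
    (p q : Fin N → ℝ)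
    (hp : ∀ k, 0 ≤ p k) (hq : ∀ k, 0 ≤ q k)
    (hfp : I p = p) (hfq : I q = q) :
    p = q := by
  have hqpos : ∀ k, 0 < q k := fun k => hfq ▸ hpos q hq k
  have hppos : ∀ k, 0 < p k := fun k => hfp ▸ hpos p hp k
  funext k
  exact le_antisymm
    (stmt_18_aux N I hmono hscale p q hp hqpos hfp hfq k)
    (stmt_18_aux N I hmono hscale q p hq hppos hfq hfp k)
end
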